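/- arXiv:1705.02041 — 2 statements merged into one kernel-verified Lean document; each statement's English description precedes it below -/
import Mathlib

section
/- Let p, q, ν ∈ ℝ with q ≠ 0 and p/q ≤ 0, and suppose ν² + p/2 ≥ 0. Then for α ∈ (0,1], the function u(x,t) = √(−p/q)·tanh(√(ν² + p/2)·x − ν·t^α/α) satisfies, for all x ∈ ℝ and t > 0, the equation D^{2α}_t u − u_{xx} − p·u − q·u³ = 0, where D^{2α}_t u = D^α_t(D^α_t u) with D^α_t w = t^{1−α}·∂w/∂t. -/
/-!
Writing `φ = b x - ν t^α/α` with `b = √(ν² + p/2)`, the conformable derivative acts on `F(φ)` as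
`-ν d/dφ` (because `t^{1-α} · d/dt (t^α/α) = 1`), while `∂ₓ` acts as `b d/dφ`. Hence
`D^{2α}_t u - u_xx = (ν² - b²) F''(φ) = -(p/2) F''(φ)` for `F = a tanh`, `a = √(-p/q)`, and the
equation reduces to the identity `tanh'' = -2 tanh (1 - tanh²)` together with `q a² = -p`.
-/

open Real Filter Topology

noncomputable def conformableDeriv (α : ℝ) (f : ℝ → ℝ) (t : ℝ) : ℝ :=
  t ^ (1 - α) * deriv f t

theorem Real.hasDerivAt_tanh (y : ℝ) : HasDerivAt tanh (1 - tanh y ^ 2) y := by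
  have h := (hasDerivAt_sinh y).div (hasDerivAt_cosh y) (cosh_pos y).ne'
  rw [show sinh / cosh = tanh from funext fun z => (tanh_eq_sinh_div_cosh z).symm] at h
  refine h.congr_deriv ?_
  have hc : cosh y ≠ 0 := (cosh_pos y).ne'
  rw [tanh_eq_sinh_div_cosh]
  field_simp

theorem Real.hasDerivAt_one_sub_tanh_sq (y : ℝ) :
    HasDerivAt (fun z => 1 - tanh z ^ 2) (-(2 * tanh y * (1 - tanh y ^ 2))) y := by
  refine (((hasDerivAt_tanh y).pow 2).const_sub 1).congr_deriv ?_
  ring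

theorem hasDerivAt_sub_mul_rpow_div (c ν : ℝ) {α t : ℝ} (hα : α ≠ 0) (ht : 0 < t) :
    HasDerivAt (fun r => c - ν * r ^ α / α) (-ν * t ^ (α - 1)) t := by
  have h := (((hasDerivAt_rpow_const (p := α) (Or.inl ht.ne')).const_mul ν).div_const α).const_sub c
  refine h.congr_deriv ?_
  field_simp

section TravellingWave

variable {F F' F'' : ℝ → ℝ}

theorem conformableDeriv_comp_sub_mul_rpow_div (hF : ∀ y, HasDerivAt F (F' y) y) (c ν : ℝ)
    {α t : ℝ} (hα : α ≠ 0) (ht : 0 < t) :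
    conformableDeriv α (fun r => F (c - ν * r ^ α / α)) t = -ν * F' (c - ν * t ^ α / α) := by
  have hpow : t ^ (1 - α) * t ^ (α - 1) = 1 := by
    rw [← rpow_add ht]; simp
  have hcomp : HasDerivAt (fun r => F (c - ν * r ^ α / α))
      (F' (c - ν * t ^ α / α) * (-ν * t ^ (α - 1))) t :=
    (hF _).comp t (hasDerivAt_sub_mul_rpow_div c ν hα ht)
  rw [conformableDeriv, hcomp.deriv]
  linear_combination (-ν * F' (c - ν * t ^ α / α)) * hpow

theorem conformableDeriv_conformableDeriv_comp_sub_mul_rpow_div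
    (hF : ∀ y, HasDerivAt F (F' y) y) (hF' : ∀ y, HasDerivAt F' (F'' y) y) (c ν : ℝ)
    {α t : ℝ} (hα : α ≠ 0) (ht : 0 < t) :
    conformableDeriv α (conformableDeriv α (fun r => F (c - ν * r ^ α / α))) t =
      ν ^ 2 * F'' (c - ν * t ^ α / α) := by
  have hfirst : conformableDeriv α (fun r => F (c - ν * r ^ α / α)) =ᶠ[𝓝 t]
      fun s => -ν * F' (c - ν * s ^ α / α) := by
    filter_upwards [Ioi_mem_nhds ht] with s hs
    exact conformableDeriv_comp_sub_mul_rpow_div hF c ν hα hs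
  rw [conformableDeriv, hfirst.deriv_eq, ← conformableDeriv,
    conformableDeriv_comp_sub_mul_rpow_div (fun y => (hF' y).const_mul (-ν)) c ν hα ht]
  ring

theorem deriv_comp_mul_sub (hF : ∀ y, HasDerivAt F (F' y) y) (b d : ℝ) :
    deriv (fun z => F (b * z - d)) = fun z => b * F' (b * z - d) := by
  funext z
  have hlin : HasDerivAt (fun w => b * w - d) b z := by
    simpa using ((hasDerivAt_id z).const_mul b).sub_const d
  exact ((hF _).comp z hlin).deriv.trans (mul_comm _ _)

theorem iteratedDeriv_two_comp_mul_sub (hF : ∀ y, HasDerivAt F (F' y) y)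
    (hF' : ∀ y, HasDerivAt F' (F'' y) y) (b d x : ℝ) :
    iteratedDeriv 2 (fun z => F (b * z - d)) x = b ^ 2 * F'' (b * x - d) := by
  rw [iteratedDeriv_succ, iteratedDeriv_one, deriv_comp_mul_sub hF,
    deriv_comp_mul_sub (F := fun y => b * F' y) (fun y => (hF' y).const_mul b)]
  ring

end TravellingWave

theorem fKG_explicit_solution (p q ν α : ℝ) (hq : q ≠ 0) (hpq : p / q ≤ 0)
    (hν : 0 ≤ ν^2 + p/2) (hα : α ∈ Set.Ioc (0:ℝ) 1) :
    let u : ℝ → ℝ → ℝ := fun x t =>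
      Real.sqrt (-p/q) * Real.tanh (Real.sqrt (ν^2 + p/2) * x - ν * t ^ α / α)
    ∀ x t : ℝ, 0 < t →
      t ^ (1 - α) * deriv (fun s : ℝ => s ^ (1 - α) * deriv (fun r : ℝ => u x r) s) t
        - iteratedDeriv 2 (fun z : ℝ => u z t) x
        - p * u x t - q * (u x t)^3 = 0 := by
  intro u x t ht
  simp only [u]
  set a := √(-p/q)
  set b := √(ν^2 + p/2)
  have hqa : q * a ^ 2 = -p := by
    rw [sq_sqrt (by rw [neg_div]; linarith)]
    field_simp
  have hb : b ^ 2 = ν ^ 2 + p / 2 := sq_sqrt hν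
  have hF (y : ℝ) := (hasDerivAt_tanh y).const_mul a
  have hF' (y : ℝ) := (hasDerivAt_one_sub_tanh_sq y).const_mul a
  have htime := conformableDeriv_conformableDeriv_comp_sub_mul_rpow_div hF hF' (b * x) ν
    hα.1.ne' ht
  unfold conformableDeriv at htime
  rw [htime, iteratedDeriv_two_comp_mul_sub hF hF' b (ν * t ^ α / α) x]
  set T := tanh (b * x - ν * t ^ α / α)
  linear_combination (2 * a * T * (1 - T ^ 2)) * hb - (a * T ^ 3) * hqa
end

section
/- For any A ≠ 0 and B a positive integer, if the function U(ξ) = A·tanh^B(ξ) satisfies −ν·U + (1/3)·p·a·U³ − q·ν·a²·U'' = 0 for all ξ in some open interval with p·a·ν·q ≠ 0, then B = 1. -/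
/-!
Since `tanh' = 1 - tanh ^ 2`, every derivative of `ξ ↦ P (tanh ξ)` for a polynomial `P` is again a
polynomial in `tanh ξ`, of degree at most one higher. Hence the equation turns into a polynomial in
`T = tanh ξ` which vanishes for infinitely many `T`, so it is the zero polynomial. For `B ≥ 2` its
`T ^ (3B)` coefficient comes from the cubic term alone, since `U''` has degree at most `B + 2 < 3B`,
and equals `p a A³ / 3 ≠ 0`.
-/

open Polynomial

namespace Real

theorem hasDerivAt_tanh_s19 (x : ℝ) : HasDerivAt tanh (1 - tanh x ^ 2) x := by
  have htanh : tanh = fun y => sinh y / cosh y := funext tanh_eq_sinh_div_cosh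
  have hcosh := (cosh_pos x).ne'
  rw [htanh]
  refine ((hasDerivAt_sinh x).div (hasDerivAt_cosh x) hcosh).congr_deriv ?_
  field_simp

end Real

/-- The derivation `d/dξ` on polynomials in `T = tanh ξ`. -/
noncomputable def tanhDerivative (P : ℝ[X]) : ℝ[X] := derivative P * (1 - X ^ 2)

theorem hasDerivAt_eval_tanh (P : ℝ[X]) (x : ℝ) :
    HasDerivAt (fun s => P.eval (Real.tanh s)) ((tanhDerivative P).eval (Real.tanh x)) x := by
  rw [tanhDerivative, eval_mul, eval_sub, eval_one, eval_pow, eval_X]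
  exact (P.hasDerivAt (Real.tanh x)).comp x (Real.hasDerivAt_tanh_s19 x)

theorem iteratedDeriv_eval_tanh (n : ℕ) (P : ℝ[X]) :
    iteratedDeriv n (fun s => P.eval (Real.tanh s))
      = fun s => (tanhDerivative^[n] P).eval (Real.tanh s) := by
  induction n generalizing P with
  | zero => simp
  | succ n ih =>
    rw [iteratedDeriv_succ', funext fun x => (hasDerivAt_eval_tanh P x).deriv, ih,
      Function.iterate_succ_apply]

theorem natDegree_tanhDerivative_le (P : ℝ[X]) :
    (tanhDerivative P).natDegree ≤ P.natDegree + 1 := by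
  rcases eq_or_ne P.natDegree 0 with hP | hP
  · rw [eq_C_of_natDegree_eq_zero hP]
    simp [tanhDerivative]
  · have hder := natDegree_derivative_lt hP
    have hquad : (1 - X ^ 2 : ℝ[X]).natDegree ≤ 2 := by compute_degree
    have := natDegree_mul_le (p := derivative P) (q := 1 - X ^ 2)
    unfold tanhDerivative
    omega

theorem natDegree_iterate_tanhDerivative_le (n : ℕ) (P : ℝ[X]) :
    (tanhDerivative^[n] P).natDegree ≤ P.natDegree + n := by
  induction n with
  | zero => simp
  | succ n ih =>
    rw [Function.iterate_succ_apply']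
    have := natDegree_tanhDerivative_le (tanhDerivative^[n] P)
    omega

theorem Polynomial.eq_zero_of_eval_tanh_eq_zero {P : ℝ[X]} {c d : ℝ} (hcd : c < d)
    (h : ∀ ξ ∈ Set.Ioo c d, P.eval (Real.tanh ξ) = 0) : P = 0 := by
  refine P.eq_zero_of_infinite_isRoot (Set.Infinite.mono ?_
    ((Set.Ioo_infinite hcd).image Real.tanh_injective.injOn))
  rintro _ ⟨ξ, hξ, rfl⟩
  exact h ξ hξ

theorem fmEW_balancing (A a p q ν : ℝ) (B : ℕ) (hA : A ≠ 0) (hB : 0 < B)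
    (hcoef : p * a * ν * q ≠ 0) (c d : ℝ) (hcd : c < d)
    (hode : ∀ ξ ∈ Set.Ioo c d,
      -ν * (A * Real.tanh ξ ^ B) + (1/3) * p * a * (A * Real.tanh ξ ^ B)^3
        - q * ν * a^2 * iteratedDeriv 2 (fun s => A * Real.tanh s ^ B) ξ = 0) :
    B = 1 := by
  by_contra hB1
  have hpa : p * a ≠ 0 := left_ne_zero_of_mul (left_ne_zero_of_mul hcoef)
  set U : ℝ[X] := C A * X ^ B
  have hUeval : (fun s => A * Real.tanh s ^ B) = fun s => U.eval (Real.tanh s) := by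
    simp [U]
  set Q : ℝ[X] := C (-ν) * U + C ((1/3) * p * a) * U ^ 3
    - C (q * ν * a ^ 2) * tanhDerivative^[2] U
  have hQ : Q = 0 := eq_zero_of_eval_tanh_eq_zero hcd fun ξ hξ => by
    have := hode ξ hξ
    rw [hUeval, iteratedDeriv_eval_tanh] at this
    simpa [Q, U] using this
  have hU'' : (tanhDerivative^[2] U).natDegree < 3 * B :=
    (natDegree_iterate_tanhDerivative_le 2 U).trans_lt
      (by have : U.natDegree ≤ B := natDegree_C_mul_X_pow_le A B; omega)
  have hcoeff : Q.coeff (3 * B) = (1/3) * p * a * A ^ 3 := by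
    have hU3 : U ^ 3 = C (A ^ 3) * X ^ (3 * B) := by
      rw [mul_pow, ← C_pow, ← pow_mul, mul_comm B 3]
    have hUcoeff : U.coeff (3 * B) = 0 := by
      rw [coeff_C_mul_X_pow, if_neg (by omega)]
    simp only [Q, coeff_add, coeff_sub, coeff_C_mul, hUcoeff, hU3, coeff_X_pow_self,
      coeff_eq_zero_of_natDegree_lt hU'']
    ring
  rw [hQ, coeff_zero] at hcoeff
  exact mul_ne_zero hpa (pow_ne_zero 3 hA) (by linear_combination -3 * hcoeff)
end
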